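/- (Error of the Gaussian-averaged gradient.) Let d : ℕ, L ≥ 0 and μ ≥ 0, and let f : EuclideanSpace ℝ (Fin d) → ℝ have L-Lipschitz gradient. Then for every x, the map u ↦ ∇f(x + μ • u) is γ_d-Bochner-integrable, and ‖∫ ∇f(x + μ • u) ∂γ_d(u) − ∇f(x)‖ ≤ μ·L·√d; in particular ‖∫ ∇f(x + μ • u) ∂γ_d(u) − ∇f(x)‖ ≤ (μ/2)·L·(d+3)^{3/2}. -/

import Mathlib

/-!
A gradient that is `L`-Lipschitz makes `u ↦ ∇f (x + μ • u)` an `L μ`-Lipschitz map, so its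
Gaussian average is within `L μ 𝔼‖u‖` of its value `∇f x` at `u = 0`. By Cauchy–Schwarz,
`𝔼‖u‖ ≤ √(𝔼‖u‖²)`, and `𝔼‖u‖² = d` because the coordinates of a standard Gaussian vector have
unit variance. The second bound is the weaker `√d ≤ (d + 3) ^ (3 / 2) / 2`.
-/

open MeasureTheory RealInnerProductSpace

/-- The standard Gaussian measure on `EuclideanSpace ℝ (Fin d)`, i.e. the product of `d`
copies of the real standard Gaussian measure. -/
noncomputable def stdGaussian (d : ℕ) : Measure (EuclideanSpace ℝ (Fin d)) :=
  Measure.map (MeasurableEquiv.toLp 2 (Fin d → ℝ))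
    (Measure.pi (fun _ : Fin d => ProbabilityTheory.gaussianReal 0 1))

theorem stdGaussian_eq_stdGaussian_euclideanSpace (d : ℕ) :
    stdGaussian d = ProbabilityTheory.stdGaussian (EuclideanSpace ℝ (Fin d)) :=
  ProbabilityTheory.map_pi_eq_stdGaussian

theorem integral_le_sqrt_integral_sq {Ω : Type*} [MeasurableSpace Ω] {ν : Measure Ω}
    [IsProbabilityMeasure ν] {X : Ω → ℝ} (hX : MemLp X 2 ν) :
    ∫ ω, X ω ∂ν ≤ √(∫ ω, X ω ^ 2 ∂ν) := by
  refine Real.le_sqrt_of_sq_le ?_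
  have hvar := ProbabilityTheory.variance_nonneg X ν
  rw [ProbabilityTheory.variance_eq_sub hX] at hvar
  simpa using hvar

section StdGaussian

variable {E : Type*} [NormedAddCommGroup E] [InnerProductSpace ℝ E] [FiniteDimensional ℝ E]
  [MeasurableSpace E] [BorelSpace E]

open ProbabilityTheory in
theorem integral_inner_sq_stdGaussian (v : E) :
    ∫ x, ⟪v, x⟫ ^ 2 ∂(ProbabilityTheory.stdGaussian E) = ‖v‖ ^ 2 := by
  have hv : MemLp (innerSL ℝ v) 2 (ProbabilityTheory.stdGaussian E) :=
    IsGaussian.memLp_dual _ _ 2 (by simp)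
  have hvar := variance_eq_sub hv
  rw [variance_dual_stdGaussian, innerSL_apply_norm, integral_strongDual_stdGaussian] at hvar
  simpa using hvar.symm

theorem integral_norm_sq_stdGaussian :
    ∫ x, ‖x‖ ^ 2 ∂(ProbabilityTheory.stdGaussian E) = Module.finrank ℝ E := by
  let b := stdOrthonormalBasis ℝ E
  simp_rw [← b.sum_sq_inner_right]
  rw [integral_finsetSum]
  · simp [integral_inner_sq_stdGaussian, b.orthonormal.1]
  · exact fun i _ =>
      (ProbabilityTheory.IsGaussian.memLp_dual _ (innerSL ℝ (b i)) 2 (by simp)).integrable_sq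

theorem integral_norm_stdGaussian_le :
    ∫ x, ‖x‖ ∂(ProbabilityTheory.stdGaussian E) ≤ √(Module.finrank ℝ E) := by
  rw [← integral_norm_sq_stdGaussian]
  exact integral_le_sqrt_integral_sq ProbabilityTheory.IsGaussian.memLp_two_id.norm

end StdGaussian

section Lipschitz

variable {E F : Type*} [NormedAddCommGroup E] [MeasurableSpace E] [OpensMeasurableSpace E]
  [SecondCountableTopology E] [NormedAddCommGroup F] {K : NNReal} {h : E → F} {ν : Measure E}

theorem LipschitzWith.integrable [IsFiniteMeasure ν] (hh : LipschitzWith K h)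
    (hν : Integrable id ν) : Integrable h ν := by
  refine Integrable.mono' ((integrable_const ‖h 0‖).add (hν.norm.const_mul K))
    hh.continuous.aestronglyMeasurable (ae_of_all _ fun u => ?_)
  calc ‖h u‖ ≤ ‖h 0‖ + ‖h u - h 0‖ := norm_le_norm_add_norm_sub' (h u) (h 0)
    _ ≤ ‖h 0‖ + K * ‖u‖ := by simpa using hh.norm_sub_le u 0

theorem LipschitzWith.norm_integral_sub_le [NormedSpace ℝ F] [CompleteSpace F]
    [IsProbabilityMeasure ν] (hh : LipschitzWith K h) (hν : Integrable id ν) :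
    ‖∫ u, h u ∂ν - h 0‖ ≤ K * ∫ u, ‖u‖ ∂ν := by
  calc ‖∫ u, h u ∂ν - h 0‖ = ‖∫ u, (h u - h 0) ∂ν‖ := by
        rw [integral_sub (hh.integrable hν) (integrable_const _), integral_const, probReal_univ,
          one_smul]
    _ ≤ ∫ u, K * ‖u‖ ∂ν :=
        norm_integral_le_of_norm_le (hν.norm.const_mul K)
          (ae_of_all _ fun u => by simpa using hh.norm_sub_le u 0)
    _ = K * ∫ u, ‖u‖ ∂ν := integral_const_mul _ _

end Lipschitz

theorem sqrt_le_half_mul_add_three_rpow {x : ℝ} (hx : 0 ≤ x) :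
    √x ≤ 1 / 2 * (x + 3) ^ ((3 : ℝ) / 2) := by
  have hpow : (x + 3) ^ ((3 : ℝ) / 2) = (x + 3) * √(x + 3) := by
    rw [show (3 : ℝ) / 2 = 1 + 1 / 2 by norm_num, Real.rpow_add (by positivity), Real.rpow_one,
      Real.sqrt_eq_rpow]
  have hmono : √x ≤ √(x + 3) := Real.sqrt_le_sqrt (by linarith)
  rw [hpow]
  nlinarith [Real.sqrt_nonneg (x + 3)]

theorem gaussian_averaged_gradient_error_general
    (d : ℕ) (L μ : ℝ) (hL : 0 ≤ L) (hμ : 0 ≤ μ)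
    (f : EuclideanSpace ℝ (Fin d) → ℝ)
    (hlip : ∀ x y, ‖gradient f x - gradient f y‖ ≤ L * ‖x - y‖) :
    ∀ x : EuclideanSpace ℝ (Fin d),
      Integrable (fun u => gradient f (x + μ • u)) (stdGaussian d) ∧
      ‖(∫ u, gradient f (x + μ • u) ∂(stdGaussian d)) - gradient f x‖ ≤
        μ * L * Real.sqrt d ∧
      ‖(∫ u, gradient f (x + μ • u) ∂(stdGaussian d)) - gradient f x‖ ≤
        μ / 2 * L * ((d : ℝ) + 3) ^ ((3 : ℝ) / 2) := by
  intro x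
  rw [stdGaussian_eq_stdGaussian_euclideanSpace]
  have hgrad : LipschitzWith (Real.toNNReal L) (gradient f) :=
    LipschitzWith.of_dist_le' fun a b => by simpa [dist_eq_norm] using hlip a b
  have hshift : LipschitzWith (Real.toNNReal L * ‖μ‖₊) fun u => gradient f (x + μ • u) :=
    hgrad.comp (by simpa using (LipschitzWith.const x).add (lipschitzWith_smul μ))
  have hid : Integrable id (ProbabilityTheory.stdGaussian (EuclideanSpace ℝ (Fin d))) :=
    ProbabilityTheory.IsGaussian.integrable_id
  have hmoment := integral_norm_stdGaussian_le (E := EuclideanSpace ℝ (Fin d))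
  rw [finrank_euclideanSpace_fin] at hmoment
  have hsqrt : ‖(∫ u, gradient f (x + μ • u) ∂ProbabilityTheory.stdGaussian _) - gradient f x‖ ≤
      μ * L * √d := by
    have herror := hshift.norm_integral_sub_le hid
    simp only [smul_zero, add_zero, NNReal.coe_mul, Real.coe_toNNReal L hL, coe_nnnorm,
      Real.norm_of_nonneg hμ] at herror
    exact herror.trans (by rw [mul_comm L]; gcongr)
  refine ⟨hshift.integrable hid, hsqrt, hsqrt.trans ?_⟩
  calc μ * L * √d ≤ μ * L * (1 / 2 * ((d : ℝ) + 3) ^ ((3 : ℝ) / 2)) := by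
        gcongr
        exact sqrt_le_half_mul_add_three_rpow d.cast_nonneg
    _ = μ / 2 * L * ((d : ℝ) + 3) ^ ((3 : ℝ) / 2) := by ring

/-- **Error of the Gaussian-averaged gradient.**
If `f` has `L`-Lipschitz gradient then for every `x` the map `u ↦ ∇f (x + μ • u)` is
Bochner-integrable against the standard Gaussian, and the Gaussian-averaged gradient differs
from `∇f(x)` by at most `μ·L·√d`; in particular by at most `(μ/2)·L·(d+3)^{3/2}`. -/
theorem gaussian_averaged_gradient_error
    (d : ℕ) (L μ : ℝ) (hL : 0 ≤ L) (hμ : 0 ≤ μ)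
    (f : EuclideanSpace ℝ (Fin d) → ℝ)
    (hdiff : Differentiable ℝ f)
    (hlip : ∀ x y, ‖gradient f x - gradient f y‖ ≤ L * ‖x - y‖) :
    ∀ x : EuclideanSpace ℝ (Fin d),
      Integrable (fun u => gradient f (x + μ • u)) (stdGaussian d) ∧
      ‖(∫ u, gradient f (x + μ • u) ∂(stdGaussian d)) - gradient f x‖ ≤
        μ * L * Real.sqrt d ∧
      ‖(∫ u, gradient f (x + μ • u) ∂(stdGaussian d)) - gradient f x‖ ≤
        μ / 2 * L * ((d : ℝ) + 3) ^ ((3 : ℝ) / 2) :=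
  gaussian_averaged_gradient_error_general d L μ hL hμ f hlip
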